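/- arXiv:0909.4370 — 8 statements merged into one kernel-verified Lean document; each statement's English description precedes it below -/
import Mathlib

section
/- In a tree T with N vertices, for any two adjacent vertices u and v, the rumor centralities satisfy R(u,T) = R(v,T) · T_u^v / (N - T_u^v). -/
noncomputable section

/-- The support (list of vertices) of the unique path from `a` to `b` in a connected graph. -/
def pathSupport {V : Type*} [DecidableEq V] (G : SimpleGraph V) (hG : G.Connected)
    (a b : V) : List V :=
  ((hG.preconnected a b).some.toPath : G.Walk a b).support

/-- `inSub G hG root u x` says that `x` belongs to the subtree rooted at `u`
when the tree `G` is rooted at `root`, i.e. `u` lies on the unique path from `root` to `x`. -/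
def inSub {V : Type*} [DecidableEq V] (G : SimpleGraph V) (hG : G.IsTree) (root u x : V) :
    Prop :=
  u ∈ pathSupport G hG.isConnected root x

/-- `subSize G hG root u` is the number of vertices of the subtree rooted at `u`
with respect to the root `root` (the quantity `T_u^root`). -/
def subSize {V : Type*} [DecidableEq V] (G : SimpleGraph V) (hG : G.IsTree) (root u : V) : ℕ :=
  Nat.card {x : V // inSub G hG root u x}

/-- `permCountOn G S u` is the number of permitted permutations of the vertex set `S`:
bijections `σ : Fin |S| ≃ S` starting at `u` such that every vertex appears after
some already-placed neighbor. -/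
def permCountOn {V : Type*} (G : SimpleGraph V) (S : Set V) (u : V) : ℕ :=
  Nat.card {σ : Fin (Nat.card S) ≃ S //
    (∀ i : Fin (Nat.card S), (i : ℕ) = 0 → (σ i : V) = u) ∧
    ∀ k : Fin (Nat.card S), 0 < (k : ℕ) →
      ∃ j : Fin (Nat.card S), (j : ℕ) < (k : ℕ) ∧ G.Adj (σ j : V) (σ k : V)}

/-- The rumor centrality `R(w,T) = N! / ∏_x T_x^w`. -/
def rumorCent {V : Type*} [Fintype V] [DecidableEq V] (G : SimpleGraph V) (hG : G.IsTree)
    (w : V) : ℚ :=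
  (Nat.factorial (Fintype.card V) : ℚ) / ∏ x : V, (subSize G hG w x : ℚ)

/-!
Rooting the tree at `u` instead of at its neighbour `v` changes only two subtree sizes: the
subtree at `v` (size `N` when rooted at `v`, size `T_v^u` when rooted at `u`) and the subtree
at `u` (size `T_u^v`, resp. `N`). Every other vertex keeps the same subtree, because the path
from `u` to any `y` is either the path from `v` to `y` with the edge `uv` prepended, or a
terminal segment of it. Since the two sides of `uv` partition the vertices,
`T_v^u = N - T_u^v`, and the ratio of the two products of subtree sizes is `T_v^u / T_u^v`.
-/

namespace SimpleGraph.IsTree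

open Walk

variable {V : Type*} [DecidableEq V] {G : SimpleGraph V} (hG : G.IsTree)

theorem inSub_iff_mem_support {r x y : V} {p : G.Walk r y} (hp : p.IsPath) :
    inSub G hG r x y ↔ x ∈ p.support := by
  have hcanon := ((hG.connected.preconnected r y).some.toPath).property
  rw [inSub, pathSupport, (hG.existsUnique_path r y).unique hcanon hp]

theorem inSub_root (r y : V) : inSub G hG r r y := by
  obtain ⟨p, hp, -⟩ := hG.existsUnique_path r y
  exact (hG.inSub_iff_mem_support hp).2 p.start_mem_support

theorem inSub_self (r x : V) : inSub G hG r x x := by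
  obtain ⟨p, hp, -⟩ := hG.existsUnique_path r x
  exact (hG.inSub_iff_mem_support hp).2 p.end_mem_support

theorem inSub_trans {r u x y : V} (hu : inSub G hG r u y) (hx : inSub G hG u x y) :
    inSub G hG r x y := by
  obtain ⟨p, hp, -⟩ := hG.existsUnique_path r y
  rw [hG.inSub_iff_mem_support hp] at hu ⊢
  rw [hG.inSub_iff_mem_support (hp.dropUntil hu)] at hx
  exact p.support_dropUntil_subset_support hu hx

/-- If `v` is on the path from `u` to `y` and `u` on the path from `v` to `y`, then the path
`u → y` would be strictly shorter than itself. -/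
theorem inSub_antisymm {u v y : V} (huv : inSub G hG u v y) (hvu : inSub G hG v u y) :
    u = v := by
  by_contra hne
  obtain ⟨p, hp, -⟩ := hG.existsUnique_path u y
  rw [hG.inSub_iff_mem_support hp] at huv
  rw [hG.inSub_iff_mem_support (hp.dropUntil huv)] at hvu
  have hback : (p.dropUntil v huv).dropUntil u hvu = p :=
    (hG.existsUnique_path u y).unique ((hp.dropUntil huv).dropUntil hvu) hp
  have hshorter := length_dropUntil_lt_length hvu hne
  have hshorter' := length_dropUntil_lt_length huv (Ne.symm hne)
  rw [hback] at hshorter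
  omega

theorem inSub_of_not_inSub_of_adj {u v y : V} (huv : G.Adj u v) (hvu : ¬ inSub G hG v u y) :
    inSub G hG u v y := by
  obtain ⟨q, hq, -⟩ := hG.existsUnique_path v y
  rw [hG.inSub_iff_mem_support hq] at hvu
  rw [hG.inSub_iff_mem_support (hq.cons hvu (h := huv))]
  exact List.mem_cons_of_mem _ q.start_mem_support

theorem inSub_iff_not_inSub_of_adj {u v y : V} (huv : G.Adj u v) :
    inSub G hG u v y ↔ ¬ inSub G hG v u y :=
  ⟨fun h h' => huv.ne (hG.inSub_antisymm h h'), hG.inSub_of_not_inSub_of_adj huv⟩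

theorem inSub_of_inSub_of_adj {u v x y : V} (huv : G.Adj u v) (hxu : x ≠ u)
    (hx : inSub G hG u x y) : inSub G hG v x y := by
  by_cases hvu : inSub G hG v u y
  · exact hG.inSub_trans hvu hx
  obtain ⟨q, hq, -⟩ := hG.existsUnique_path v y
  rw [hG.inSub_iff_mem_support hq] at hvu ⊢
  rw [hG.inSub_iff_mem_support (hq.cons hvu (h := huv))] at hx
  exact (List.mem_cons.mp hx).resolve_left hxu

theorem subSize_eq_of_adj {u v x : V} (huv : G.Adj u v) (hxu : x ≠ u) (hxv : x ≠ v) :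
    subSize G hG u x = subSize G hG v x :=
  Nat.card_congr <| Equiv.subtypeEquivRight fun _ =>
    ⟨hG.inSub_of_inSub_of_adj huv hxu, hG.inSub_of_inSub_of_adj huv.symm hxv⟩

variable [Fintype V]

theorem subSize_pos (r x : V) : 0 < subSize G hG r x :=
  have : Nonempty {y // inSub G hG r x y} := ⟨⟨x, hG.inSub_self r x⟩⟩
  Nat.card_pos

theorem subSize_root (r : V) : subSize G hG r r = Fintype.card V := by
  rw [subSize, ← Nat.card_eq_fintype_card]
  exact Nat.card_congr (Equiv.subtypeUnivEquiv (hG.inSub_root r))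

theorem subSize_add_subSize_of_adj {u v : V} (huv : G.Adj u v) :
    subSize G hG u v + subSize G hG v u = Fintype.card V := by
  classical
  have hcompl : subSize G hG u v = Fintype.card {y // ¬ inSub G hG v u y} := by
    rw [subSize, ← Nat.card_eq_fintype_card]
    exact Nat.card_congr (Equiv.subtypeEquivRight fun _ => hG.inSub_iff_not_inSub_of_adj huv)
  rw [hcompl, Fintype.card_subtype_compl, subSize, Nat.card_eq_fintype_card,
    Nat.sub_add_cancel (Fintype.card_subtype_le _)]

theorem prod_subSize_mul_subSize_of_adj {u v : V} (huv : G.Adj u v) :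
    (∏ x, subSize G hG u x) * subSize G hG v u = (∏ x, subSize G hG v x) * subSize G hG u v := by
  have hv : v ∈ Finset.univ.erase u := Finset.mem_erase.2 ⟨huv.ne.symm, Finset.mem_univ v⟩
  have hsplit (r : V) : ∏ x, subSize G hG r x = subSize G hG r u * (subSize G hG r v *
      ∏ x ∈ (Finset.univ.erase u).erase v, subSize G hG r x) := by
    rw [← Finset.mul_prod_erase _ _ (Finset.mem_univ u), ← Finset.mul_prod_erase _ _ hv]
  have hrest : ∏ x ∈ (Finset.univ.erase u).erase v, subSize G hG u x =
      ∏ x ∈ (Finset.univ.erase u).erase v, subSize G hG v x := by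
    refine Finset.prod_congr rfl fun x hx => ?_
    simp only [Finset.mem_erase, Finset.mem_univ, and_true] at hx
    exact hG.subSize_eq_of_adj huv hx.2 hx.1
  rw [hsplit u, hsplit v, hrest, hG.subSize_root u, hG.subSize_root v]
  ring

end SimpleGraph.IsTree

/-- For adjacent vertices `u, v` of a tree on `N` vertices,
`R(u,T) = R(v,T) · T_u^v / (N - T_u^v)`. -/
theorem rumorCent_adj_ratio {V : Type*} [Fintype V] [DecidableEq V]
    (G : SimpleGraph V) (hG : G.IsTree) (u v : V) (huv : G.Adj u v) :
    rumorCent G hG u =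
      rumorCent G hG v * (subSize G hG v u : ℚ) /
        ((Fintype.card V : ℚ) - (subSize G hG v u : ℚ)) := by
  have hcompl : (Fintype.card V : ℚ) - subSize G hG v u = subSize G hG u v := by
    rw [← hG.subSize_add_subSize_of_adj huv]; push_cast; ring
  have hprod : (∏ x, (subSize G hG u x : ℚ)) * subSize G hG v u =
      (∏ x, (subSize G hG v x : ℚ)) * subSize G hG u v := by
    exact_mod_cast hG.prod_subSize_mul_subSize_of_adj huv
  have hprod_pos (r : V) : (0 : ℚ) < ∏ x, (subSize G hG r x : ℚ) :=
    Finset.prod_pos fun x _ => mod_cast hG.subSize_pos r x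
  have hsize_pos : (0 : ℚ) < subSize G hG u v := mod_cast hG.subSize_pos u v
  rw [rumorCent, rumorCent, hcompl, div_mul_eq_mul_div, div_div,
    div_eq_div_iff (hprod_pos u).ne' (mul_pos (hprod_pos v) hsize_pos).ne']
  linear_combination -(Nat.factorial (Fintype.card V) : ℚ) * hprod
end
end

section
/- In a tree T with N vertices, for any vertex v, the ratio of rumor centralities satisfies R(v,T)/R(v*,T) = ∏_{i ∈ P(v*,v)} T_i^{v*} / (N - T_i^{v*}), where P(v*,v) is the set of vertices on the unique path from v* to v, excluding v* but including v. -/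
noncomputable section

/-!
Moving the root across an edge `ab` changes only two subtree sizes: `T_a` drops from `N` to
`T_a^b = N - T_b^a` while `T_b` rises from `T_b^a` to `N`, every other subtree being the same
for both roots. Hence `R(b)/R(a) = T_b^a / (N - T_b^a)`. Along the path from `v*` to `v` these
ratios telescope, and each factor may be computed with root `v*`, since moving the root one step
forward does not change the subtree at any later vertex of the path.
-/

namespace RumorCentrality

open SimpleGraph Walk Finset

variable {V : Type*} [DecidableEq V] {G : SimpleGraph V} (hG : G.IsTree)

include hG in
theorem pathSupport_eq_support {a b : V} {p : G.Walk a b} (hp : p.IsPath) :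
    pathSupport G hG.connected a b = p.support := by
  rw [pathSupport, (hG.existsUnique_path a b).unique (Path.isPath _) hp]

theorem inSub_iff_mem_support {r u x : V} {p : G.Walk x r} (hp : p.IsPath) :
    inSub G hG r u x ↔ u ∈ p.support := by
  rw [inSub, pathSupport_eq_support hG hp.reverse, support_reverse, List.mem_reverse]

theorem inSub_root (r x : V) : inSub G hG r r x :=
  start_mem_support _

theorem inSub_self (r u : V) : inSub G hG r u u :=
  end_mem_support _

theorem inSub_iff_not_inSub_of_adj {a b x : V} (hab : G.Adj a b) :
    inSub G hG a b x ↔ ¬inSub G hG b a x := by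
  obtain ⟨p, hp⟩ := hG.connected.preconnected x a |>.exists_isPath
  obtain ⟨q, hq⟩ := hG.connected.preconnected x b |>.exists_isPath
  rw [inSub_iff_mem_support hG hp, inSub_iff_mem_support hG hq]
  exact ⟨hG.isAcyclic.ne_mem_support_of_support_of_adj_of_isPath hp hq hab,
    hG.isAcyclic.mem_support_of_ne_mem_support_of_adj_of_isPath hp hq hab⟩

theorem inSub_iff_inSub_of_adj {a b u x : V} (hab : G.Adj a b) (hua : u ≠ a) (hub : u ≠ b) :
    inSub G hG a u x ↔ inSub G hG b u x := by
  obtain ⟨p, hp⟩ := hG.connected.preconnected x a |>.exists_isPath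
  obtain ⟨q, hq⟩ := hG.connected.preconnected x b |>.exists_isPath
  rw [inSub_iff_mem_support hG hp, inSub_iff_mem_support hG hq]
  -- One of the two paths from `x` extends the other by the edge `ab`.
  by_cases ha : a ∈ q.support
  · rw [hG.isAcyclic.path_concat hp hq hab ha]
    simp [hub]
  · rw [hG.isAcyclic.path_concat hq hp hab.symm
      (hG.isAcyclic.mem_support_of_ne_mem_support_of_adj_of_isPath hp hq hab ha)]
    simp [hua]

theorem subSize_eq_of_adj {a b u : V} (hab : G.Adj a b) (hua : u ≠ a) (hub : u ≠ b) :
    subSize G hG a u = subSize G hG b u :=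
  Nat.card_congr (Equiv.subtypeEquivRight fun _ => inSub_iff_inSub_of_adj hG hab hua hub)

variable [Fintype V]

theorem subSize_root (r : V) : subSize G hG r r = Fintype.card V := by
  rw [subSize, ← Nat.card_eq_fintype_card]
  exact Nat.card_congr (Equiv.subtypeUnivEquiv (inSub_root hG r))

theorem subSize_pos (r u : V) : 0 < subSize G hG r u :=
  have : Nonempty {x // inSub G hG r u x} := ⟨⟨u, inSub_self hG r u⟩⟩
  Nat.card_pos

theorem subSize_add_subSize_of_adj {a b : V} (hab : G.Adj a b) :
    subSize G hG a b + subSize G hG b a = Fintype.card V := by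
  classical
  rw [subSize, subSize, Nat.card_eq_fintype_card, Nat.card_eq_fintype_card,
    Fintype.card_congr (Equiv.subtypeEquivRight fun x => inSub_iff_not_inSub_of_adj hG hab),
    Fintype.card_subtype_compl, Nat.sub_add_cancel (Fintype.card_subtype_le _)]

omit [DecidableEq V] in
theorem prod_mul_eq_prod_mul_of_swap {M : Type*} [CommMonoid M] {f g : V → M} {a b : V}
    (hab : a ≠ b) (hfg : ∀ x, x ≠ a → x ≠ b → f x = g x) (hswap : f a = g b) :
    (∏ x, f x) * g a = (∏ x, g x) * f b := by
  classical
  have hrest : ∏ x ∈ {a, b}ᶜ, f x = ∏ x ∈ {a, b}ᶜ, g x :=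
    prod_congr rfl fun x hx => hfg x (by grind [mem_compl]) (by grind [mem_compl])
  rw [← prod_mul_prod_compl {a, b} f, ← prod_mul_prod_compl {a, b} g, prod_pair hab,
    prod_pair hab, hrest, hswap]
  ac_rfl

theorem rumorCent_pos (w : V) : 0 < rumorCent G hG w :=
  div_pos (mod_cast Nat.factorial_pos _)
    (prod_pos fun x _ => mod_cast subSize_pos hG w x)

theorem rumorCent_div_of_adj {a b : V} (hab : G.Adj a b) :
    rumorCent G hG b / rumorCent G hG a =
      (subSize G hG a b : ℚ) / ((Fintype.card V : ℚ) - (subSize G hG a b : ℚ)) := by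
  have hsizes : (subSize G hG b a : ℚ) = Fintype.card V - subSize G hG a b := by
    rw [← subSize_add_subSize_of_adj hG hab]
    push_cast
    ring
  have hprod : (∏ x, (subSize G hG a x : ℚ)) * subSize G hG b a =
      (∏ x, (subSize G hG b x : ℚ)) * subSize G hG a b :=
    prod_mul_eq_prod_mul_of_swap (f := fun x => (subSize G hG a x : ℚ)) hab.ne
      (fun x hxa hxb => by rw [subSize_eq_of_adj hG hab hxa hxb])
      (by rw [subSize_root, subSize_root])
  have hpos : ∀ r u, (0 : ℚ) < subSize G hG r u := fun r u => mod_cast subSize_pos hG r u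
  rw [← hsizes, rumorCent, rumorCent, div_div_div_cancel_left' _ _ (by positivity),
    div_eq_div_iff (prod_pos fun x _ => hpos b x).ne' (hpos b a).ne', hprod, mul_comm]

theorem rumorCent_div_eq_prod_of_isPath {a b : V} {p : G.Walk a b} (hp : p.IsPath) :
    rumorCent G hG b / rumorCent G hG a =
      ∏ i ∈ p.support.toFinset.erase a,
        (subSize G hG a i : ℚ) / ((Fintype.card V : ℚ) - (subSize G hG a i : ℚ)) := by
  induction p with
  | nil => simp [(rumorCent_pos hG _).ne']
  | @cons a c b hac q ih =>
    obtain ⟨hq, haq⟩ := (cons_isPath_iff hac q).mp hp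
    have hsupport : (cons hac q).support.toFinset.erase a =
        insert c (q.support.toFinset.erase c) := by
      rw [support_cons, List.toFinset_cons, erase_insert (by simpa using haq),
        insert_erase (by simp)]
    have hfactors : ∀ i ∈ q.support.toFinset.erase c, subSize G hG c i = subSize G hG a i :=
      fun i hi => (subSize_eq_of_adj hG hac (fun hia => haq (by simp_all))
        (ne_of_mem_erase hi)).symm
    rw [← div_mul_div_cancel₀ (rumorCent_pos hG c).ne', ih hq, rumorCent_div_of_adj hG hac,
      hsupport, prod_insert (notMem_erase c _), mul_comm]
    congr 1
    exact prod_congr rfl fun i hi => by rw [hfactors i hi]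

end RumorCentrality

/-- `R(v,T)/R(v*,T) = ∏_{i ∈ P(v*,v)} T_i^{v*}/(N - T_i^{v*})`, where `P(v*,v)` is the
set of vertices on the unique path from `v*` to `v`, excluding `v*` (but including `v`). -/
theorem rumorCent_path_ratio {V : Type*} [Fintype V] [DecidableEq V]
    (G : SimpleGraph V) (hG : G.IsTree) (vstar v : V) :
    rumorCent G hG v / rumorCent G hG vstar =
      ∏ i ∈ (pathSupport G hG.isConnected vstar v).toFinset.erase vstar,
        (subSize G hG vstar i : ℚ) /
          ((Fintype.card V : ℚ) - (subSize G hG vstar i : ℚ)) := by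
  obtain ⟨p, hp⟩ := hG.connected.preconnected vstar v |>.exists_isPath
  rw [RumorCentrality.pathSupport_eq_support hG hp]
  exact RumorCentrality.rumorCent_div_eq_prod_of_isPath hG hp
end
end

section
/- In a tree T with N vertices, if a vertex u satisfies T_v^u ≤ N/2 for all vertices v ≠ u, then u is a rumor center, i.e., R(u,T) ≥ R(v,T) for all vertices v. -/
noncomputable section

namespace RumorAux

open SimpleGraph Walk

variable {V : Type*} [DecidableEq V] (G : SimpleGraph V) (hG : G.IsTree)

/-- The canonical path from `a` to `b`. -/
def tp (a b : V) : G.Walk a b :=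
  ((hG.isConnected.preconnected a b).some.toPath : G.Walk a b)

lemma tp_isPath (a b : V) : (tp G hG a b).IsPath :=
  ((hG.isConnected.preconnected a b).some.toPath).2

lemma tp_eq {a b : V} (p : G.Walk a b) (hp : p.IsPath) : tp G hG a b = p :=
  (hG.existsUnique_path a b).unique (tp_isPath G hG a b) hp

lemma inSub_iff (r x y : V) : inSub G hG r x y ↔ x ∈ (tp G hG r y).support := Iff.rfl

lemma tp_adj {a b : V} (h : G.Adj a b) : tp G hG a b = Walk.cons h Walk.nil :=
  tp_eq G hG _ (by simp [Walk.cons_isPath_iff, h.ne])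

/-- If `x` is in both halves of a split of a path at `b`, then `x = b`. -/
lemma eq_of_mem_take_drop {a y b x : V} {p : G.Walk a y} (hp : p.IsPath) (hb : b ∈ p.support)
    (h1 : x ∈ (p.takeUntil b hb).support) (h2 : x ∈ (p.dropUntil b hb).support) : x = b := by
  by_contra hxb
  have hnd : p.support.Nodup := hp.support_nodup
  rw [← p.take_spec hb, Walk.support_append] at hnd
  have hdisj := List.disjoint_of_nodup_append hnd
  have h2' : x ∈ (p.dropUntil b hb).support.tail := by
    rw [(p.dropUntil b hb).support_eq_cons] at h2
    rcases List.mem_cons.mp h2 with h | h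
    · exact absurd h hxb
    · exact h
  exact hdisj h1 h2'

/-- Claim A: for adjacent `a b` and `x ∉ {a,b}`, `x ∈ path(a,y) → x ∈ path(b,y)`. -/
lemma mem_tp_of_adj {a b x y : V} (h : G.Adj a b) (hxa : x ≠ a) (hxb : x ≠ b)
    (hx : x ∈ (tp G hG a y).support) : x ∈ (tp G hG b y).support := by
  set p := tp G hG a y with hpdef
  have hpp : p.IsPath := tp_isPath G hG a y
  by_cases hb : b ∈ p.support
  · have hdrop : tp G hG b y = p.dropUntil b hb := tp_eq G hG _ (hpp.dropUntil hb)
    rw [hdrop]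
    have hx' : x ∈ ((p.takeUntil b hb).append (p.dropUntil b hb)).support := by
      rw [p.take_spec hb]; exact hx
    rw [Walk.mem_support_append_iff] at hx'
    rcases hx' with hx' | hx'
    · exfalso
      have ht : p.takeUntil b hb = Walk.cons h Walk.nil :=
        (tp_eq G hG _ (hpp.takeUntil hb)).symm.trans (tp_adj G hG h)
      rw [ht] at hx'
      simp only [Walk.support_cons, Walk.support_nil, List.mem_cons,
        List.mem_singleton, List.not_mem_nil, or_false] at hx'
      rcases hx' with rfl | rfl
      · exact hxa rfl
      · exact hxb rfl
    · exact hx'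
  · have hcons : tp G hG b y = Walk.cons h.symm p := tp_eq G hG _ (hpp.cons hb)
    rw [hcons]
    simp [hx]

/-- Claim C, coverage: for adjacent `a b` and any `y`, `b ∈ path(a,y)` or `a ∈ path(b,y)`. -/
lemma cover {a b : V} (h : G.Adj a b) (y : V) :
    b ∈ (tp G hG a y).support ∨ a ∈ (tp G hG b y).support := by
  by_cases hb : b ∈ (tp G hG a y).support
  · exact Or.inl hb
  · right
    have hcons : tp G hG b y = Walk.cons h.symm (tp G hG a y) :=
      tp_eq G hG _ ((tp_isPath G hG a y).cons hb)
    rw [hcons]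
    simp

/-- Claim C, disjointness. -/
lemma not_both {a b : V} (h : G.Adj a b) (y : V) (h1 : b ∈ (tp G hG a y).support) :
    a ∉ (tp G hG b y).support := by
  intro h2
  have hpp := tp_isPath G hG a y
  have hdrop : tp G hG b y = (tp G hG a y).dropUntil b h1 := tp_eq G hG _ (hpp.dropUntil h1)
  rw [hdrop] at h2
  exact h.ne (eq_of_mem_take_drop G hpp h1 (Walk.start_mem_support _) h2)

/-- The path from `u` to `b` when `b` is adjacent to `a` and not on the path `u → a`. -/
lemma tp_concat {u a b : V} (h : G.Adj a b) (hb : b ∉ (tp G hG u a).support) :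
    tp G hG u b = (tp G hG u a).append (Walk.cons h Walk.nil) := by
  refine tp_eq G hG _ ?_
  rw [Walk.isPath_def, Walk.support_append]
  simp only [Walk.support_cons, Walk.support_nil, List.tail_cons]
  refine List.Nodup.append (tp_isPath G hG u a).support_nodup (List.nodup_singleton b) ?_
  intro c hc hcb
  rw [List.mem_singleton] at hcb
  exact hb (hcb ▸ hc)

/-- Claim D, forward: if `a` is the neighbor of `b` towards `u`, then
`b ∈ path(a,y) → b ∈ path(u,y)`. -/
lemma mem_tp_up {u a b y : V} (h : G.Adj a b) (hb : b ∉ (tp G hG u a).support)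
    (hx : b ∈ (tp G hG a y).support) : b ∈ (tp G hG u y).support := by
  classical
  set p := tp G hG a y with hpdef
  have hpp : p.IsPath := tp_isPath G hG a y
  set d := p.dropUntil b hx with hddef
  have hdP : d.IsPath := hpp.dropUntil hx
  have had : a ∉ d.support := fun h2 =>
    h.ne (eq_of_mem_take_drop G hpp hx (Walk.start_mem_support _) h2)
  have hdisj : ∀ c, c ∈ (tp G hG u a).support → c ∈ d.support → False := by
    intro c hc1 hc2
    have hP1 : (((tp G hG u a).dropUntil c hc1).reverse).IsPath :=
      ((tp_isPath G hG u a).dropUntil hc1).reverse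
    have hbP1 : b ∉ (((tp G hG u a).dropUntil c hc1).reverse).support := by
      rw [Walk.support_reverse]
      intro hmem
      exact hb (Walk.support_dropUntil_subset _ hc1 (List.mem_reverse.mp hmem))
    have hP2 : (Walk.cons h (d.takeUntil c hc2)).IsPath :=
      (hdP.takeUntil hc2).cons (fun hh => had (Walk.support_takeUntil_subset _ hc2 hh))
    have heq : ((tp G hG u a).dropUntil c hc1).reverse = Walk.cons h (d.takeUntil c hc2) :=
      (hG.existsUnique_path a c).unique hP1 hP2
    apply hbP1
    rw [heq]
    simp only [Walk.support_cons, List.mem_cons]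
    exact Or.inr (Walk.start_mem_support _)
  have hw : ((tp G hG u a).append (Walk.cons h d)).IsPath := by
    rw [Walk.isPath_def, Walk.support_append]
    simp only [Walk.support_cons, List.tail_cons]
    exact List.Nodup.append (tp_isPath G hG u a).support_nodup hdP.support_nodup
      (fun c hc1 hc2 => hdisj c hc1 hc2)
  have htp : tp G hG u y = (tp G hG u a).append (Walk.cons h d) := tp_eq G hG _ hw
  rw [htp, Walk.mem_support_append_iff]
  right
  simp only [Walk.support_cons, List.mem_cons]
  exact Or.inr (Walk.start_mem_support _)

/-- Claim D, backward. -/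
lemma mem_tp_down {u a b y : V} (h : G.Adj a b) (hb : b ∉ (tp G hG u a).support)
    (hx : b ∈ (tp G hG u y).support) : b ∈ (tp G hG a y).support := by
  rcases cover G hG h y with h1 | h2
  · exact h1
  · exfalso
    have hpp := tp_isPath G hG u y
    have hdrop : tp G hG b y = (tp G hG u y).dropUntil b hx := tp_eq G hG _ (hpp.dropUntil hx)
    have ha2 : a ∈ ((tp G hG u y).dropUntil b hx).support := hdrop ▸ h2
    have htake : (tp G hG u y).takeUntil b hx = (tp G hG u a).append (Walk.cons h Walk.nil) :=
      (tp_eq G hG _ (hpp.takeUntil hx)).symm.trans (tp_concat G hG h hb)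
    have ha1 : a ∈ ((tp G hG u y).takeUntil b hx).support := by
      rw [htake, Walk.mem_support_append_iff]
      exact Or.inl (Walk.end_mem_support _)
    exact h.ne (eq_of_mem_take_drop G hpp hx ha1 ha2)

section Counting

variable [Fintype V]

lemma subSize_self (r : V) : subSize G hG r r = Fintype.card V := by
  rw [subSize]
  exact (Nat.card_congr (Equiv.subtypeUnivEquiv (p := fun y => inSub G hG r r y)
    (fun y => (Walk.start_mem_support (tp G hG r y) : inSub G hG r r y)))).trans
    Nat.card_eq_fintype_card

lemma subSize_pos (r x : V) : 0 < subSize G hG r x := by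
  have : Nonempty {y : V // inSub G hG r x y} :=
    ⟨⟨x, (Walk.end_mem_support (tp G hG r x) : inSub G hG r x x)⟩⟩
  exact Nat.card_pos

lemma subSize_add {a b : V} (h : G.Adj a b) :
    subSize G hG a b + subSize G hG b a = Fintype.card V := by
  classical
  have e1 : {y : V // inSub G hG b a y} ≃ {y : V // ¬ inSub G hG a b y} :=
    Equiv.subtypeEquivRight (fun y =>
      ⟨fun h2 hb => not_both G hG h y hb h2, fun hn => (cover G hG h y).resolve_left hn⟩)
  have e2 := Nat.card_congr (Equiv.sumCompl (fun y => inSub G hG a b y))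
  rw [Nat.card_sum] at e2
  rw [subSize, subSize, Nat.card_congr e1, e2, Nat.card_eq_fintype_card]

lemma subSize_up {u a b : V} (h : G.Adj a b) (hb : b ∉ (tp G hG u a).support) :
    subSize G hG a b = subSize G hG u b :=
  Nat.card_congr (Equiv.subtypeEquivRight (fun y =>
    ⟨mem_tp_up G hG h hb, mem_tp_down G hG h hb⟩))

lemma subSize_side {a b x : V} (h : G.Adj a b) (hxa : x ≠ a) (hxb : x ≠ b) :
    subSize G hG a x = subSize G hG b x :=
  Nat.card_congr (Equiv.subtypeEquivRight (fun y =>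
    ⟨mem_tp_of_adj G hG h hxa hxb, mem_tp_of_adj G hG h.symm hxb hxa⟩))

lemma prod_le {u a b : V} (h : G.Adj a b) (hb : b ∉ (tp G hG u a).support)
    (hk : (subSize G hG u b : ℚ) ≤ (Fintype.card V : ℚ) / 2) :
    ∏ x : V, (subSize G hG a x : ℚ) ≤ ∏ x : V, (subSize G hG b x : ℚ) := by
  classical
  have hab : a ≠ b := h.ne
  have key : ∀ w : V, ∏ x : V, (subSize G hG w x : ℚ) =
      (∏ x ∈ Finset.univ \ {a, b}, (subSize G hG w x : ℚ)) *
        ((subSize G hG w a : ℚ) * (subSize G hG w b : ℚ)) := by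
    intro w
    rw [← Finset.prod_sdiff (Finset.subset_univ ({a, b} : Finset V)), Finset.prod_pair hab]
  rw [key a, key b]
  have hrest : (∏ x ∈ Finset.univ \ {a, b}, (subSize G hG a x : ℚ)) =
      ∏ x ∈ Finset.univ \ {a, b}, (subSize G hG b x : ℚ) := by
    refine Finset.prod_congr rfl (fun x hx => ?_)
    simp only [Finset.mem_sdiff, Finset.mem_univ, Finset.mem_insert, Finset.mem_singleton,
      true_and, not_or] at hx
    rw [subSize_side G hG h hx.1 hx.2]
  rw [hrest]
  refine mul_le_mul_of_nonneg_left ?_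
    (Finset.prod_nonneg (fun x _ => by positivity))
  have hN : (Fintype.card V : ℚ) = (subSize G hG a b : ℚ) + (subSize G hG b a : ℚ) := by
    rw [← Nat.cast_add, subSize_add G hG h]
  have hkk : (subSize G hG a b : ℚ) = (subSize G hG u b : ℚ) := by
    rw [subSize_up G hG h hb]
  have haa : (subSize G hG a a : ℚ) = (Fintype.card V : ℚ) := by
    rw [subSize_self G hG a]
  have hbb : (subSize G hG b b : ℚ) = (Fintype.card V : ℚ) := by
    rw [subSize_self G hG b]
  rw [haa, hbb]
  have hba : (subSize G hG u b : ℚ) ≤ (subSize G hG b a : ℚ) := by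
    rw [← hkk] at hk ⊢
    linarith [hk, hN]
  have hNpos : (0:ℚ) ≤ (Fintype.card V : ℚ) := by positivity
  calc (Fintype.card V : ℚ) * (subSize G hG a b : ℚ)
      ≤ (Fintype.card V : ℚ) * (subSize G hG b a : ℚ) := by
        refine mul_le_mul_of_nonneg_left ?_ hNpos
        rw [hkk]; exact hba
    _ = (subSize G hG b a : ℚ) * (Fintype.card V : ℚ) := mul_comm _ _

lemma prod_pos (w : V) : 0 < ∏ x : V, (subSize G hG w x : ℚ) :=
  Finset.prod_pos (fun x _ => by exact_mod_cast subSize_pos G hG w x)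

lemma rumor_step {u a b : V} (h : G.Adj a b) (hb : b ∉ (tp G hG u a).support)
    (hk : (subSize G hG u b : ℚ) ≤ (Fintype.card V : ℚ) / 2) :
    rumorCent G hG b ≤ rumorCent G hG a := by
  rw [rumorCent, rumorCent]
  exact div_le_div_of_nonneg_left (by positivity) (prod_pos G hG a)
    (prod_le G hG h hb hk)

end Counting

end RumorAux

/-- If all subtrees with respect to root `u` have size at most `N/2`, then `u`
is a rumor center. -/
theorem subtree_le_half_rumor_center {V : Type*} [Fintype V] [DecidableEq V]
    (G : SimpleGraph V) (hG : G.IsTree) (u : V)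
    (hhalf : ∀ v : V, v ≠ u → (subSize G hG u v : ℚ) ≤ (Fintype.card V : ℚ) / 2) :
    ∀ v : V, rumorCent G hG v ≤ rumorCent G hG u := by
  open RumorAux SimpleGraph in
  have main : ∀ (w t : V) (p : G.Walk w t), t = u → p.IsPath →
      rumorCent G hG w ≤ rumorCent G hG u := by
    intro w t p
    induction p with
    | nil => rintro rfl _; exact le_rfl
    | @cons w c t h q ih =>
      intro ht hp
      subst ht
      have hq : q.IsPath := hp.of_cons
      have hw : w ∉ q.support := ((SimpleGraph.Walk.cons_isPath_iff h q).mp hp).2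
      refine le_trans ?_ (ih rfl hq)
      have htp : tp G hG t c = q.reverse := tp_eq G hG _ hq.reverse
      have hb : w ∉ (tp G hG t c).support := by
        rw [htp, SimpleGraph.Walk.support_reverse]
        simpa using hw
      have hwu : w ≠ t := fun hwu => hw (hwu ▸ q.end_mem_support)
      exact rumor_step G hG h.symm hb (hhalf w hwu)
  exact fun v => main v u (tp G hG v u) rfl (tp_isPath G hG v u)
end
end

section
/- A finite tree has at most 2 rumor centers, i.e., at most two vertices achieving the maximum value of rumor centrality R(·,T). -/
noncomputable section

/-!
Moving the root of the tree from `v` to a neighbour `u` changes only the factors `T_u` and `T_v`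
of `∏ₓ Tₓ`, so `R(v) / R(u) = T_v^u / T_u^v`, while `T_v^u + T_u^v = N`. Hence at a rumor center
`v` every branch hanging off `v` has at most `N / 2` vertices, i.e. `N ≤ 2 T_v^w` for all `w ≠ v`.
If two rumor centers `a`, `b` were not adjacent, with `x` the neighbour of `a` towards `b`, then
`N ≤ 2 T_b^a < 2 T_x^a = 2 (N - T_a^x) ≤ N`. So rumor centers are pairwise adjacent, and a tree
has no triangle.
-/

open SimpleGraph Finset

section Subtrees

variable {V : Type*} [DecidableEq V] {G : SimpleGraph V}

theorem pathSupport_eq_support (hc : G.Connected) (hG : G.IsAcyclic) {a b : V} {p : G.Walk a b}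
    (hp : p.IsPath) : pathSupport G hc a b = p.support :=
  congrArg (fun q : G.Path a b => q.1.support) (hG.subsingleton_path a b |>.elim _ ⟨p, hp⟩)

variable (hG : G.IsTree)

theorem inSub_iff_mem_support {r u x : V} {p : G.Walk r x} (hp : p.IsPath) :
    inSub G hG r u x ↔ u ∈ p.support := by
  rw [inSub, pathSupport_eq_support _ hG.isAcyclic hp]

theorem inSub_iff_mem_support' {r u x : V} {p : G.Walk x r} (hp : p.IsPath) :
    inSub G hG r u x ↔ u ∈ p.support := by
  simp [inSub_iff_mem_support hG hp.reverse]

theorem inSub_root (r x : V) : inSub G hG r r x :=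
  Walk.start_mem_support _

theorem inSub_self (r u : V) : inSub G hG r u u :=
  Walk.end_mem_support _

theorem inSub_trans {r u m y : V} (hum : inSub G hG r u m) (hmy : inSub G hG r m y) :
    inSub G hG r u y := by
  obtain ⟨p, hp⟩ := hG.connected.exists_isPath r y
  rw [inSub_iff_mem_support hG hp] at hmy ⊢
  rw [inSub_iff_mem_support hG (hp.takeUntil hmy)] at hum
  exact p.support_takeUntil_subset_support hmy hum

theorem inSub_iff_not_inSub_of_adj {a b : V} (hab : G.Adj a b) (y : V) :
    inSub G hG a b y ↔ ¬ inSub G hG b a y := by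
  obtain ⟨qa, hqa⟩ := hG.connected.exists_isPath y a
  obtain ⟨qb, hqb⟩ := hG.connected.exists_isPath y b
  rw [inSub_iff_mem_support' hG hqa, inSub_iff_mem_support' hG hqb]
  exact ⟨hG.isAcyclic.ne_mem_support_of_support_of_adj_of_isPath hqa hqb hab,
    hG.isAcyclic.mem_support_of_ne_mem_support_of_adj_of_isPath hqa hqb hab⟩

theorem inSub_of_inSub_of_adj {a b x y : V} (hab : G.Adj a b) (hxa : x ≠ a)
    (hx : inSub G hG a x y) : inSub G hG b x y := by
  obtain ⟨qa, hqa⟩ := hG.connected.exists_isPath y a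
  obtain ⟨qb, hqb⟩ := hG.connected.exists_isPath y b
  rw [inSub_iff_mem_support' hG hqa] at hx
  rw [inSub_iff_mem_support' hG hqb]
  by_cases hb : b ∈ qa.support
  · rw [hG.isAcyclic.path_concat hqb hqa hab.symm hb, Walk.support_concat] at hx
    simpa [hxa] using hx
  · have ha := hG.isAcyclic.mem_support_of_ne_mem_support_of_adj_of_isPath hqb hqa hab.symm hb
    rw [hG.isAcyclic.path_concat hqa hqb hab ha]
    exact qa.support_subset_support_concat hab hx

theorem inSub_iff_of_adj {a b x y : V} (hab : G.Adj a b) (hxa : x ≠ a) (hxb : x ≠ b) :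
    inSub G hG a x y ↔ inSub G hG b x y :=
  ⟨inSub_of_inSub_of_adj hG hab hxa, inSub_of_inSub_of_adj hG hab.symm hxb⟩

theorem inSub_iff_of_walk {r r' m : V} (p : G.Walk r r') (hm : m ∉ p.support) (y : V) :
    inSub G hG r m y ↔ inSub G hG r' m y := by
  induction p with
  | nil => rfl
  | @cons a b _ h q ih =>
    rw [Walk.support_cons, List.mem_cons, not_or] at hm
    have hm' : m ≠ b := by rintro rfl; exact hm.2 q.start_mem_support
    exact (inSub_iff_of_adj hG h hm.1 hm').trans (ih hm.2)

end Subtrees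

section Counting

variable {V : Type*} [Fintype V] [DecidableEq V] {G : SimpleGraph V} (hG : G.IsTree)

instance (r u : V) : DecidablePred (inSub G hG r u) :=
  fun x => inferInstanceAs (Decidable (u ∈ pathSupport G hG.connected r x))

theorem subSize_eq_card (r u : V) : subSize G hG r u = #{x | inSub G hG r u x} := by
  rw [subSize, Nat.card_eq_fintype_card, Fintype.card_subtype]

theorem subSize_root (r : V) : subSize G hG r r = Fintype.card V := by
  simp [subSize_eq_card, inSub_root]

theorem subSize_pos (r u : V) : 0 < subSize G hG r u := by
  rw [subSize_eq_card]
  exact card_pos.2 ⟨u, by simp [inSub_self]⟩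

theorem subSize_add_subSize {a b : V} (hab : G.Adj a b) :
    subSize G hG a b + subSize G hG b a = Fintype.card V := by
  simp_rw [subSize_eq_card, inSub_iff_not_inSub_of_adj hG hab]
  rw [add_comm]
  exact card_filter_add_card_filter_not _

theorem subSize_eq_of_walk {r r' m : V} (p : G.Walk r r') (hm : m ∉ p.support) :
    subSize G hG r m = subSize G hG r' m := by
  simp_rw [subSize_eq_card, inSub_iff_of_walk hG p hm]

theorem subSize_lt_subSize {r u m : V} (hum : inSub G hG r u m) (hmu : ¬ inSub G hG r m u) :
    subSize G hG r m < subSize G hG r u := by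
  rw [subSize_eq_card, subSize_eq_card]
  refine card_lt_card ⟨fun y hy => ?_, fun hsub => hmu ?_⟩
  · simp only [mem_filter, mem_univ, true_and] at hy ⊢
    exact inSub_trans hG hum hy
  · simpa using hsub (by simpa using inSub_self hG r u)

def subSizeProd (w : V) : ℕ := ∏ x, subSize G hG w x

theorem subSizeProd_pos (w : V) : 0 < subSizeProd hG w :=
  prod_pos fun x _ => subSize_pos hG w x

theorem rumorCent_le_rumorCent_iff (u v : V) :
    rumorCent G hG u ≤ rumorCent G hG v ↔ subSizeProd hG v ≤ subSizeProd hG u := by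
  have hprod (w : V) : ∏ x, (subSize G hG w x : ℚ) = subSizeProd hG w := by
    simp [subSizeProd]
  rw [rumorCent, rumorCent, hprod, hprod, div_le_div_iff_of_pos_left (by positivity)
    (mod_cast subSizeProd_pos hG u) (mod_cast subSizeProd_pos hG v), Nat.cast_le]

theorem subSizeProd_mul_subSize {a b : V} (hab : G.Adj a b) :
    subSizeProd hG a * subSize G hG b a = subSizeProd hG b * subSize G hG a b := by
  have hsplit (w : V) : subSizeProd hG w =
      (∏ x ∈ univ \ {a, b}, subSize G hG w x) * (subSize G hG w a * subSize G hG w b) := by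
    rw [subSizeProd, ← prod_pair hab.ne, prod_sdiff (subset_univ _)]
  have hrest : ∏ x ∈ univ \ {a, b}, subSize G hG a x = ∏ x ∈ univ \ {a, b}, subSize G hG b x := by
    refine prod_congr rfl fun x hx => ?_
    simp only [mem_sdiff, mem_univ, mem_insert, mem_singleton, true_and, not_or] at hx
    simp_rw [subSize_eq_card, inSub_iff_of_adj hG hab hx.1 hx.2]
  rw [hsplit a, hsplit b, hrest, subSize_root, subSize_root]
  ring

end Counting

section RumorCenter

variable {V : Type*} [Fintype V] [DecidableEq V] {G : SimpleGraph V} {hG : G.IsTree}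

def IsRumorCenter (G : SimpleGraph V) (hG : G.IsTree) (v : V) : Prop :=
  ∀ w, rumorCent G hG w ≤ rumorCent G hG v

theorem IsRumorCenter.card_le_two_mul_subSize_of_adj {u v : V} (hv : IsRumorCenter G hG v)
    (hvu : G.Adj v u) : Fintype.card V ≤ 2 * subSize G hG u v := by
  have hprod : subSizeProd hG v ≤ subSizeProd hG u :=
    (rumorCent_le_rumorCent_iff hG u v).1 (hv u)
  have hside : subSize G hG v u ≤ subSize G hG u v := by
    refine le_of_mul_le_mul_left ?_ (subSizeProd_pos hG u)
    calc subSizeProd hG u * subSize G hG v u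
        = subSizeProd hG v * subSize G hG u v := (subSizeProd_mul_subSize hG hvu).symm
      _ ≤ subSizeProd hG u * subSize G hG u v := Nat.mul_le_mul_right _ hprod
  have := subSize_add_subSize hG hvu
  omega

theorem IsRumorCenter.card_le_two_mul_subSize {v w : V} (hv : IsRumorCenter G hG v)
    (hwv : w ≠ v) : Fintype.card V ≤ 2 * subSize G hG w v := by
  obtain ⟨p, hp⟩ := hG.connected.exists_isPath v w
  cases p with
  | nil => exact absurd rfl hwv
  | cons hvu q =>
    rw [← subSize_eq_of_walk hG q ((Walk.cons_isPath_iff _ _).1 hp).2]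
    exact hv.card_le_two_mul_subSize_of_adj hvu

theorem IsRumorCenter.adj {a b : V} (ha : IsRumorCenter G hG a) (hb : IsRumorCenter G hG b)
    (hab : a ≠ b) : G.Adj a b := by
  by_contra hnadj
  obtain ⟨p, hp⟩ := hG.connected.exists_isPath a b
  cases p with
  | nil => exact hab rfl
  | @cons _ x _ hax q =>
    have hxb : x ≠ b := by rintro rfl; exact hnadj hax
    have hx : inSub G hG a x b := by
      simp [inSub_iff_mem_support hG hp]
    have hbx : ¬ inSub G hG a b x := by
      simp [inSub_iff_mem_support hG (Path.singleton hax).isPath, hab.symm, hxb.symm]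
    have h₁ := hb.card_le_two_mul_subSize hab
    have h₂ := subSize_lt_subSize hG hx hbx
    have h₃ := ha.card_le_two_mul_subSize_of_adj hax
    have h₄ := subSize_add_subSize hG hax
    omega

end RumorCenter

/-- A finite tree has at most two rumor centers. -/
theorem card_rumor_centers_le_two {V : Type*} [Fintype V] [DecidableEq V]
    (G : SimpleGraph V) (hG : G.IsTree) :
    Nat.card {v : V // ∀ w : V, rumorCent G hG w ≤ rumorCent G hG v} ≤ 2 := by
  have hclique : G.IsClique {v | IsRumorCenter G hG v} :=
    fun _ ha _ hb hab => IsRumorCenter.adj ha hb hab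
  rw [Nat.card_eq_fintype_card, Fintype.card_subtype]
  by_contra! h
  refine hG.isAcyclic.cliqueFree h _ ((isNClique_iff G).2 ⟨?_, rfl⟩)
  simpa [IsRumorCenter] using hclique
end
end

section
/- If N_1(t) and N_2(t) are independent unit-rate Poisson random variables with parameter t, then P(N_1(t)=N_2(t)) + (1/2)·(P(N_1(t)=N_2(t)+1) + P(N_1(t)+1=N_2(t))) = Σ_{k=0}^∞ (e^{-t} t^k/k!)^2 (1 + t/(k+1)), and this quantity is O(1/√t) as t → ∞. -/
/-!
Writing `p k = e^{-t} t^k / k!`, independence gives `P(N₁ = f(N₂)) = ∑ p (f k) p k`, and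
`p (k+1) = p k · t/(k+1)` turns the right-hand side into `∑ p k² + ∑ p (k+1) p k`. Both sums
are at most `max_k p k`. The weights increase up to `⌊t⌋`, and Stirling's lower bound on `k!`
together with `t^k e^{-t} ≤ k^k e^{-k}` gives `p k ≤ 1/√k`; hence `p k ≤ 1/√⌊t⌋ ≤ √2/√t`
for every `k` once `t ≥ 1`.
-/

open MeasureTheory ProbabilityTheory Filter Asymptotics Real Nat

theorem pow_mul_exp_neg_le_pow_mul_exp_neg {t : ℝ} (ht : 0 ≤ t) (n : ℕ) :
    t ^ n * exp (-t) ≤ n ^ n * exp (-n) := by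
  obtain rfl | hn := eq_or_ne n 0
  · simpa using ht
  have hn' : (0 : ℝ) < n := by positivity
  -- `(t/n) e^{-t/n} ≤ e^{-1}`, raised to the `n`-th power
  have key := pow_le_pow_left₀ (by positivity) (mul_exp_neg_le_exp_neg_one (t / n)) n
  have hexp : (n : ℝ) * -(t / n) = -t := by field_simp
  rw [mul_pow, ← exp_nat_mul, ← exp_nat_mul, div_pow, hexp, mul_neg_one, div_mul_eq_mul_div,
    div_le_iff₀ (by positivity)] at key
  linarith

lemma one_div_sqrt_floor_le {x : ℝ} (hx : 1 ≤ x) : 1 / √⌊x⌋₊ ≤ √2 / √x := by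
  have hfloor : (1 : ℝ) ≤ ⌊x⌋₊ := by exact_mod_cast Nat.floor_pos.2 hx
  have hx2 : x ≤ 2 * ⌊x⌋₊ := by linarith [Nat.lt_floor_add_one x]
  rw [div_le_div_iff₀ (by positivity) (by positivity), one_mul, ← sqrt_mul zero_le_two]
  exact sqrt_le_sqrt hx2

section WeightedSums

variable {ι : Type*} {p q : ι → ℝ} {M : ℝ}

lemma summable_mul_of_le (hp : Summable p) (hp0 : ∀ i, 0 ≤ p i) (hq0 : ∀ i, 0 ≤ q i)
    (hqM : ∀ i, q i ≤ M) : Summable fun i => q i * p i :=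
  (hp.mul_left M).of_nonneg_of_le (fun i => mul_nonneg (hq0 i) (hp0 i))
    fun i => mul_le_mul_of_nonneg_right (hqM i) (hp0 i)

lemma tsum_mul_le_of_le (hp : Summable p) (hp0 : ∀ i, 0 ≤ p i) (hq0 : ∀ i, 0 ≤ q i)
    (hqM : ∀ i, q i ≤ M) : ∑' i, q i * p i ≤ M * ∑' i, p i := by
  rw [← tsum_mul_left]
  exact (summable_mul_of_le hp hp0 hq0 hqM).tsum_le_tsum
    (fun i => mul_le_mul_of_nonneg_right (hqM i) (hp0 i)) (hp.mul_left M)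

end WeightedSums

noncomputable def poissonWeight (t : ℝ) (n : ℕ) : ℝ := exp (-t) * t ^ n / n !

section PoissonWeight

variable {t : ℝ}

lemma poissonWeight_nonneg (ht : 0 ≤ t) (n : ℕ) : 0 ≤ poissonWeight t n := by
  unfold poissonWeight; positivity

lemma hasSum_poissonWeight (t : ℝ) : HasSum (poissonWeight t) 1 := by
  have h := (NormedSpace.expSeries_div_hasSum_exp t).mul_left (exp (-t))
  rw [← exp_eq_exp_ℝ, ← exp_add, neg_add_cancel, exp_zero] at h
  simp only [← mul_div_assoc] at h
  exact h

lemma poissonWeight_succ (t : ℝ) (n : ℕ) :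
    poissonWeight t (n + 1) = poissonWeight t n * (t / (n + 1)) := by
  simp only [poissonWeight, pow_succ, factorial_succ, cast_mul, cast_succ]
  field_simp

lemma poissonWeight_le_poissonWeight {m n : ℕ} (hmn : m ≤ n) (hn : n ≤ t) :
    poissonWeight t m ≤ poissonWeight t n := by
  induction n, hmn using Nat.le_induction with
  | base => rfl
  | succ n _ ih =>
    have hn' : (n : ℝ) + 1 ≤ t := by exact_mod_cast hn
    rw [poissonWeight_succ]
    exact (ih (by linarith)).trans <| le_mul_of_one_le_right
      (poissonWeight_nonneg (by linarith) n) ((one_le_div (by positivity)).2 hn')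

lemma poissonWeight_le_inv_sqrt (ht : 0 ≤ t) {n : ℕ} (hn : n ≠ 0) :
    poissonWeight t n ≤ 1 / √n := by
  have hstirling : √n * (n ^ n * exp (-n)) ≤ n ! := by
    calc √n * (n ^ n * exp (-n)) ≤ √(2 * π * n) * (n / exp 1) ^ n := by
          rw [div_pow, ← exp_nat_mul, mul_one, exp_neg, div_eq_mul_inv]
          gcongr
          nlinarith [pi_gt_three]
      _ ≤ n ! := Stirling.le_factorial_stirling n
  rw [poissonWeight, div_le_div_iff₀ (by positivity) (by positivity), one_mul]
  calc exp (-t) * t ^ n * √n = √n * (t ^ n * exp (-t)) := by ring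
    _ ≤ √n * (n ^ n * exp (-n)) :=
      mul_le_mul_of_nonneg_left (pow_mul_exp_neg_le_pow_mul_exp_neg ht n) (sqrt_nonneg _)
    _ ≤ n ! := hstirling

lemma poissonWeight_le_one (ht : 0 ≤ t) (n : ℕ) : poissonWeight t n ≤ 1 :=
  le_hasSum (hasSum_poissonWeight t) n fun m _ => poissonWeight_nonneg ht m

lemma poissonWeight_le_inv_sqrt_floor (ht : 1 ≤ t) (n : ℕ) :
    poissonWeight t n ≤ 1 / √⌊t⌋₊ := by
  have hfloor : ⌊t⌋₊ ≠ 0 := (Nat.floor_pos.2 ht).ne'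
  rcases le_total n ⌊t⌋₊ with hn | hn
  · exact (poissonWeight_le_poissonWeight hn (Nat.floor_le (by linarith))).trans
      (poissonWeight_le_inv_sqrt (by linarith) hfloor)
  · refine (poissonWeight_le_inv_sqrt (by linarith) (by omega)).trans ?_
    have hfloor_pos : 0 < ⌊t⌋₊ := Nat.pos_of_ne_zero hfloor
    gcongr

lemma poissonWeight_le_sqrt_two_div_sqrt (ht : 1 ≤ t) (n : ℕ) :
    poissonWeight t n ≤ √2 / √t :=
  (poissonWeight_le_inv_sqrt_floor ht n).trans (one_div_sqrt_floor_le ht)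

lemma tsum_poissonWeight_sq_mul (ht : 0 ≤ t) :
    ∑' n : ℕ, poissonWeight t n ^ 2 * (1 + t / (n + 1)) =
      ∑' n, poissonWeight t n * poissonWeight t n +
        ∑' n, poissonWeight t (n + 1) * poissonWeight t n := by
  have hw := poissonWeight_nonneg ht
  have hsum := (hasSum_poissonWeight t).summable
  rw [← (summable_mul_of_le hsum hw hw (poissonWeight_le_one ht)).tsum_add
    (summable_mul_of_le hsum hw (fun n => hw (n + 1)) fun n => poissonWeight_le_one ht (n + 1))]
  refine tsum_congr fun n => ?_
  rw [poissonWeight_succ]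
  ring

lemma tsum_poissonWeight_sq_mul_le (ht : 1 ≤ t) :
    ∑' n : ℕ, poissonWeight t n ^ 2 * (1 + t / (n + 1)) ≤ 2 * √2 / √t := by
  have hw := poissonWeight_nonneg (zero_le_one.trans ht)
  have hsum := (hasSum_poissonWeight t).summable
  have hbound := poissonWeight_le_sqrt_two_div_sqrt ht
  have hsq := tsum_mul_le_of_le hsum hw hw hbound
  have hsucc := tsum_mul_le_of_le hsum hw (fun n => hw (n + 1)) fun n => hbound (n + 1)
  rw [(hasSum_poissonWeight t).tsum_eq, mul_one] at hsq hsucc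
  rw [tsum_poissonWeight_sq_mul (zero_le_one.trans ht)]
  linarith [show 2 * √2 / √t = √2 / √t + √2 / √t by ring]

end PoissonWeight

namespace ProbabilityTheory.IndepFun

variable {Ω α β : Type*} {mΩ : MeasurableSpace Ω} [MeasurableSpace α] [MeasurableSingletonClass α]
  [MeasurableSpace β] [MeasurableSingletonClass β] [Countable β] {μ : Measure Ω}
  {X : Ω → α} {Y : Ω → β}

theorem measure_eq_comp_eq_tsum (hXY : IndepFun X Y μ) (hX : Measurable X)
    (hY : Measurable Y) (f : β → α) :
    μ {ω | X ω = f (Y ω)} = ∑' b, μ {ω | X ω = f b} * μ {ω | Y ω = b} := by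
  have hdecomp : {ω | X ω = f (Y ω)} = ⋃ b, X ⁻¹' {f b} ∩ Y ⁻¹' {b} := by
    ext ω
    simp
  rw [hdecomp, measure_iUnion]
  · exact tsum_congr fun b => hXY.measure_inter_preimage_eq_mul _ _
      (measurableSet_singleton _) (measurableSet_singleton _)
  · exact fun b b' hbb' => Set.disjoint_left.2 fun ω hb hb' => hbb' (hb.2.symm.trans hb'.2)
  · exact fun b => (hX (measurableSet_singleton _)).inter (hY (measurableSet_singleton _))

theorem measureReal_eq_comp_eq_tsum (hXY : IndepFun X Y μ) (hX : Measurable X)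
    (hY : Measurable Y) (f : β → α) {p : α → ℝ} {q : β → ℝ} (hp : ∀ a, 0 ≤ p a)
    (hq : ∀ b, 0 ≤ q b) (hpX : ∀ a, μ {ω | X ω = a} = ENNReal.ofReal (p a))
    (hqY : ∀ b, μ {ω | Y ω = b} = ENNReal.ofReal (q b)) :
    μ.real {ω | X ω = f (Y ω)} = ∑' b, p (f b) * q b := by
  simp only [measureReal_def, hXY.measure_eq_comp_eq_tsum hX hY f, hpX, hqY]
  rw [ENNReal.tsum_toReal_eq fun b => ENNReal.mul_ne_top ENNReal.ofReal_ne_top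
    ENNReal.ofReal_ne_top]
  exact tsum_congr fun b => by
    rw [ENNReal.toReal_mul, ENNReal.toReal_ofReal (hp _), ENNReal.toReal_ofReal (hq b)]

end ProbabilityTheory.IndepFun

theorem line_detection_prob_general {Ω : Type*} [MeasurableSpace Ω] (μ : Measure Ω)
    (X Y : ℝ → Ω → ℕ)
    (hmX : ∀ t, Measurable (X t)) (hmY : ∀ t, Measurable (Y t))
    (hindep : ∀ t > 0, IndepFun (X t) (Y t) μ)
    (hX : ∀ t > 0, ∀ k : ℕ,
      μ {ω | X t ω = k} = ENNReal.ofReal (Real.exp (-t) * t ^ k / (Nat.factorial k : ℝ)))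
    (hY : ∀ t > 0, ∀ k : ℕ,
      μ {ω | Y t ω = k} = ENNReal.ofReal (Real.exp (-t) * t ^ k / (Nat.factorial k : ℝ))) :
    (∀ t > 0,
      (μ {ω | X t ω = Y t ω}).toReal +
          (1 / 2) * ((μ {ω | X t ω = Y t ω + 1}).toReal +
            (μ {ω | X t ω + 1 = Y t ω}).toReal) =
        ∑' k : ℕ,
          (Real.exp (-t) * t ^ k / (Nat.factorial k : ℝ)) ^ 2 * (1 + t / (k + 1))) ∧
    (fun t : ℝ => ∑' k : ℕ,
        (Real.exp (-t) * t ^ k / (Nat.factorial k : ℝ)) ^ 2 * (1 + t / (k + 1)))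
      =O[atTop] fun t => 1 / Real.sqrt t := by
  refine ⟨fun t ht => ?_, ?_⟩
  · have hw := poissonWeight_nonneg ht.le
    have hXY (f : ℕ → ℕ) : μ.real {ω | X t ω = f (Y t ω)} =
        ∑' k, poissonWeight t (f k) * poissonWeight t k :=
      (hindep t ht).measureReal_eq_comp_eq_tsum (hmX t) (hmY t) f hw hw (hX t ht) (hY t ht)
    have hYX : μ.real {ω | Y t ω = X t ω + 1} =
        ∑' k, poissonWeight t (k + 1) * poissonWeight t k :=
      (hindep t ht).symm.measureReal_eq_comp_eq_tsum (hmY t) (hmX t) _ hw hw (hY t ht) (hX t ht)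
    have hdiag : μ.real {ω | X t ω = Y t ω} = ∑' k, poissonWeight t k * poissonWeight t k :=
      hXY id
    have hsymm : {ω | X t ω + 1 = Y t ω} = {ω | Y t ω = X t ω + 1} := Set.ext fun ω => eq_comm
    change μ.real _ + 1 / 2 * (μ.real _ + μ.real _) = ∑' k, poissonWeight t k ^ 2 * _
    rw [hdiag, hXY (· + 1), hsymm, hYX, tsum_poissonWeight_sq_mul ht.le]
    ring
  · refine IsBigO.of_bound (2 * √2) ?_
    filter_upwards [eventually_ge_atTop 1] with t ht
    have hw := poissonWeight_nonneg (zero_le_one.trans ht)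
    change ‖∑' k, poissonWeight t k ^ 2 * (1 + t / (k + 1))‖ ≤ _
    rw [norm_of_nonneg (tsum_nonneg fun k => by positivity), norm_of_nonneg (by positivity)]
    simpa only [mul_one_div] using tsum_poissonWeight_sq_mul_le ht

/-- For independent Poisson(t) random variables `N₁(t)`, `N₂(t)`, the probability
`P(N₁=N₂) + (1/2)(P(N₁=N₂+1) + P(N₁+1=N₂))` equals `∑_k (e^{-t} t^k/k!)² (1 + t/(k+1))`,
and this quantity is `O(1/√t)` as `t → ∞`. -/
theorem line_detection_prob {Ω : Type*} [MeasurableSpace Ω] (μ : Measure Ω)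
    [IsProbabilityMeasure μ] (X Y : ℝ → Ω → ℕ)
    (hmX : ∀ t, Measurable (X t)) (hmY : ∀ t, Measurable (Y t))
    (hindep : ∀ t > 0, IndepFun (X t) (Y t) μ)
    (hX : ∀ t > 0, ∀ k : ℕ,
      μ {ω | X t ω = k} = ENNReal.ofReal (Real.exp (-t) * t ^ k / (Nat.factorial k : ℝ)))
    (hY : ∀ t > 0, ∀ k : ℕ,
      μ {ω | Y t ω = k} = ENNReal.ofReal (Real.exp (-t) * t ^ k / (Nat.factorial k : ℝ))) :
    (∀ t > 0,
      (μ {ω | X t ω = Y t ω}).toReal +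
          (1 / 2) * ((μ {ω | X t ω = Y t ω + 1}).toReal +
            (μ {ω | X t ω + 1 = Y t ω}).toReal) =
        ∑' k : ℕ,
          (Real.exp (-t) * t ^ k / (Nat.factorial k : ℝ)) ^ 2 * (1 + t / (k + 1))) ∧
    (fun t : ℝ => ∑' k : ℕ,
        (Real.exp (-t) * t ^ k / (Nat.factorial k : ℝ)) ^ 2 * (1 + t / (k + 1)))
      =O[atTop] fun t => 1 / Real.sqrt t :=
  line_detection_prob_general μ X Y hmX hmY hindep hX hY
end

section
/- For a ≥ 1 and n ≥ 2, the product C(n) = ∏_{i=1}^{n-1}(1 + 1/(a·i)) satisfies (n-1)^{1/a} e^{-ζ(2)/a} ≤ C(n) ≤ e·n^{1/a}, where ζ(2) = π²/6. -/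
/-!
Since `1 + x ≤ exp x`, the product is at most `exp (H_{n-1} / a) ≤ exp ((1 + log (n - 1)) / a)`.
Since `exp (x - x ^ 2) ≤ 1 + x` for `x ≥ 0` and `∑ 1 / (a i) ^ 2 ≤ ζ(2) / a` when `a ≥ 1`,
it is at least `exp ((H_{n-1} - ζ(2)) / a)`, and `log n ≤ H_{n-1}`.
-/

open Real Finset

lemma Real.exp_sub_sq_le_one_add {x : ℝ} (hx : 0 ≤ x) : exp (x - x ^ 2) ≤ 1 + x := by
  have hx1 : 0 < 1 + x := by linarith
  -- `x / (1 + x) = 1 - (1 + x)⁻¹` lies between `x - x ^ 2` and `log (1 + x)`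
  have h : x - x ^ 2 ≤ 1 - (1 + x)⁻¹ := by
    rw [← sub_nonneg]
    have : 1 - (1 + x)⁻¹ - (x - x ^ 2) = x ^ 3 / (1 + x) := by field_simp; ring
    rw [this]; positivity
  calc exp (x - x ^ 2) ≤ exp (log (1 + x)) :=
        exp_le_exp.mpr (h.trans (one_sub_inv_le_log_of_pos hx1))
    _ = 1 + x := exp_log hx1

lemma Real.exp_sum_sub_sq_le_prod_one_add {ι : Type*} (s : Finset ι) {f : ι → ℝ}
    (hf : ∀ i ∈ s, 0 ≤ f i) :
    exp (∑ i ∈ s, (f i - f i ^ 2)) ≤ ∏ i ∈ s, (1 + f i) := by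
  rw [exp_sum]
  exact prod_le_prod (fun _ _ ↦ (exp_pos _).le) fun i hi ↦ exp_sub_sq_le_one_add (hf i hi)

lemma sum_Icc_one_div_mul_eq_harmonic_div (a : ℝ) (m : ℕ) :
    ∑ i ∈ Icc 1 m, 1 / (a * i) = harmonic m / a := by
  simp only [harmonic_eq_sum_Icc, Rat.cast_sum, Rat.cast_inv, Rat.cast_natCast, sum_div]
  refine sum_congr rfl fun i _ ↦ ?_
  rw [mul_comm, ← div_div, one_div]

lemma sum_Icc_one_div_sq_le_zeta_two (m : ℕ) :
    ∑ i ∈ Icc 1 m, 1 / (i : ℝ) ^ 2 ≤ π ^ 2 / 6 :=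
  sum_le_hasSum _ (fun _ _ ↦ by positivity) hasSum_zeta_two

lemma sum_Icc_one_div_mul_sq_le {a : ℝ} (ha : 1 ≤ a) (m : ℕ) :
    ∑ i ∈ Icc 1 m, (1 / (a * i)) ^ 2 ≤ π ^ 2 / 6 / a := by
  calc ∑ i ∈ Icc 1 m, (1 / (a * i)) ^ 2 ≤ ∑ i ∈ Icc 1 m, 1 / (i : ℝ) ^ 2 / a := by
        refine sum_le_sum fun i _ ↦ ?_
        rw [show (1 / (a * i)) ^ 2 = 1 / (i : ℝ) ^ 2 / a * a⁻¹ by ring]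
        exact mul_le_of_le_one_right (by positivity) (inv_le_one_of_one_le₀ ha)
    _ ≤ π ^ 2 / 6 / a := by
        rw [← sum_div]; gcongr; exact sum_Icc_one_div_sq_le_zeta_two m

lemma prod_Icc_one_add_one_div_mul_le {a : ℝ} (ha : 0 ≤ a) (m : ℕ) :
    ∏ i ∈ Icc 1 m, (1 + 1 / (a * i)) ≤ exp (harmonic m / a) := by
  rw [← sum_Icc_one_div_mul_eq_harmonic_div]
  exact prod_one_add_le_exp_sum _ fun i ↦ by positivity

lemma exp_harmonic_sub_zeta_two_div_le_prod {a : ℝ} (ha : 1 ≤ a) (m : ℕ) :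
    exp ((harmonic m - π ^ 2 / 6) / a) ≤ ∏ i ∈ Icc 1 m, (1 + 1 / (a * i)) := by
  refine le_trans ?_ (exp_sum_sub_sq_le_prod_one_add _ fun i _ ↦ by positivity)
  rw [sum_sub_distrib, sum_Icc_one_div_mul_eq_harmonic_div, sub_div]
  gcongr
  exact sum_Icc_one_div_mul_sq_le ha m

/-- For `a ≥ 1` and `n ≥ 2`, the product `C(n) = ∏_{i=1}^{n-1} (1 + 1/(a i))` satisfies
`(n-1)^{1/a} e^{-ζ(2)/a} ≤ C(n) ≤ e n^{1/a}`, where `ζ(2) = π²/6`. -/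
theorem product_bounds (a : ℝ) (ha : 1 ≤ a) (n : ℕ) (hn : 2 ≤ n) :
    ((n : ℝ) - 1) ^ ((1 : ℝ) / a) * Real.exp (-(Real.pi ^ 2 / 6) / a) ≤
        ∏ i ∈ Finset.Icc 1 (n - 1), (1 + 1 / (a * (i : ℝ))) ∧
      ∏ i ∈ Finset.Icc 1 (n - 1), (1 + 1 / (a * (i : ℝ))) ≤
        Real.exp 1 * (n : ℝ) ^ ((1 : ℝ) / a) := by
  obtain ⟨m, rfl⟩ : ∃ m, n = m + 1 := ⟨n - 1, by omega⟩
  have hm : (0 : ℝ) < m := by exact_mod_cast (by omega : 0 < m)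
  have ha0 : 0 < a := by linarith
  have hlog : log m ≤ log (m + 1) := log_le_log hm (by linarith)
  push_cast
  simp only [add_tsub_cancel_right]
  constructor
  · calc (m : ℝ) ^ (1 / a) * exp (-(π ^ 2 / 6) / a) = exp ((log m - π ^ 2 / 6) / a) := by
          rw [rpow_def_of_pos hm, ← exp_add]; ring_nf
      _ ≤ exp ((harmonic m - π ^ 2 / 6) / a) := by
          gcongr
          exact hlog.trans (by exact_mod_cast log_add_one_le_harmonic m)
      _ ≤ _ := exp_harmonic_sub_zeta_two_div_le_prod ha m
  · calc _ ≤ exp (harmonic m / a) := prod_Icc_one_add_one_div_mul_le ha0.le m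
      _ ≤ exp ((1 + log (m + 1)) / a) := by
          gcongr
          exact (harmonic_le_one_add_log m).trans (by linarith)
      _ ≤ exp (1 + log (m + 1) / a) := by
          rw [add_div]
          gcongr
          exact div_le_one_of_le₀ ha ha0.le
      _ = exp 1 * ((m : ℝ) + 1) ^ (1 / a) := by
          rw [rpow_def_of_pos (by positivity), exp_add]; ring_nf
end

section
/- Let a = d - 2 ≥ 1 and f_n(t) = C(n)·e^{-t}(1-e^{-at})^{n-1} with C(n) = ∏_{i=1}^{n-1}(1+1/(a·i)). Then there exists γ ∈ (0,1) such that limsup_{n→∞} sup_{t ∈ (0,t_n)} f_{(d-1)n}(t)/f_n(t) ≤ 1 - γ, where t_n = (1/a)·log((n-1)a+1). -/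
open Filter

noncomputable section

/-- The density `fₙ(t) = C(n) e^{-t} (1 - e^{-a t})^{n-1}`
with `C(n) = ∏_{i=1}^{n-1} (1 + 1/(a i))`. -/
def fdens (a : ℝ) (n : ℕ) (t : ℝ) : ℝ :=
  (∏ i ∈ Finset.Icc 1 (n - 1), (1 + 1 / (a * (i : ℝ)))) *
    (Real.exp (-t) * (1 - Real.exp (-a * t)) ^ (n - 1))

/-!
For `m = (d - 1) n` the ratio factors as
`f_m(t) / f_n(t) = ∏_{i=n}^{m-1} (1 + 1/(a i)) · (1 - e^{-a t})^{m-n}`.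
The product is at most `exp ((1/a) ∑ 1/i) ≤ ((m-1)/(n-1))^{1/a}`, and for `t < tₙ` we have
`e^{-a t} > 1/((n-1) a + 1) ≥ 1/(m-n)`, so the power is at most `e^{-1}`. As `n → ∞` this bound
tends to `(1+a)^{1/a} / e`, which is `< 1` because `1 + a < e^a`.
-/

open Real Topology

def supRatio (a : ℝ) (m n : ℕ) : ℝ :=
  sSup ((fun t : ℝ => fdens a m t / fdens a n t) '' Set.Ioo 0 ((1 / a) * log ((n - 1) * a + 1)))

section Bounds

variable {a t : ℝ}

lemma fdens_pos (ha : 0 < a) (ht : 0 < t) (n : ℕ) : 0 < fdens a n t := by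
  have hs : 0 < 1 - exp (-a * t) := by
    rw [sub_pos, exp_lt_one_iff, neg_mul, neg_lt_zero]
    positivity
  have hC : 0 < ∏ i ∈ Finset.Icc 1 (n - 1), (1 + 1 / (a * (i : ℝ))) :=
    Finset.prod_pos fun i hi => by
      have : (0 : ℝ) < i := by exact_mod_cast (Finset.mem_Icc.1 hi).1
      positivity
  unfold fdens
  positivity

lemma fdens_eq_mul {n m : ℕ} (hn : 1 ≤ n) (hnm : n ≤ m) :
    fdens a m t = fdens a n t *
      ((∏ i ∈ Finset.Ico n m, (1 + 1 / (a * (i : ℝ)))) * (1 - exp (-a * t)) ^ (m - n)) := by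
  have hIcc : ∀ k : ℕ, Finset.Icc 1 (k - 1) = Finset.Ico 1 k := fun k => by
    ext; simp only [Finset.mem_Icc, Finset.mem_Ico]; omega
  have hprod := Finset.prod_Ico_consecutive (fun i : ℕ => 1 + 1 / (a * (i : ℝ))) hn hnm
  have hexp : m - 1 = (n - 1) + (m - n) := by omega
  rw [fdens, fdens, hIcc, hIcc, ← hprod, hexp, pow_add]
  ring

lemma sum_Ico_one_div_le_log {n m : ℕ} (hn : 2 ≤ n) (hnm : n ≤ m) :
    ∑ i ∈ Finset.Ico n m, (1 : ℝ) / i ≤ log ((m - 1) / (n - 1)) := by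
  have hn1 : (1 : ℝ) ≤ n - 1 := by
    have : (2 : ℝ) ≤ n := by exact_mod_cast hn
    linarith
  induction m, hnm using Nat.le_induction with
  | base => simp [div_self (by linarith : (n : ℝ) - 1 ≠ 0)]
  | succ m hnm ih =>
    have hm1 : (0 : ℝ) < m - 1 := by
      have : (n : ℝ) ≤ m := by exact_mod_cast hnm
      linarith
    have hm0 : (0 : ℝ) < m := by linarith
    have hstep : (1 : ℝ) / m ≤ log (m / (m - 1)) := by
      have := one_sub_inv_le_log_of_pos (div_pos hm0 hm1)
      rw [inv_div] at this
      convert this using 1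
      field_simp
      ring
    rw [Finset.sum_Ico_succ_top hnm, Nat.cast_add_one, add_sub_cancel_right]
    calc _ ≤ log ((m - 1) / (n - 1)) + log (m / (m - 1)) := add_le_add ih hstep
      _ = log (m / (n - 1)) := by
        rw [← log_mul (div_pos hm1 (by linarith)).ne' (div_pos hm0 hm1).ne']
        congr 1
        field_simp

lemma prod_Ico_one_add_one_div_le_rpow (ha : 0 < a) {n m : ℕ} (hn : 2 ≤ n) (hnm : n ≤ m) :
    ∏ i ∈ Finset.Ico n m, (1 + 1 / (a * (i : ℝ))) ≤ ((m - 1) / (n - 1) : ℝ) ^ (1 / a) := by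
  have hpos : (0 : ℝ) < (m - 1) / (n - 1) := by
    have : (2 : ℝ) ≤ n := by exact_mod_cast hn
    have : (n : ℝ) ≤ m := by exact_mod_cast hnm
    apply div_pos <;> linarith
  calc ∏ i ∈ Finset.Ico n m, (1 + 1 / (a * (i : ℝ)))
      ≤ ∏ i ∈ Finset.Ico n m, exp (1 / a * (1 / i)) :=
        Finset.prod_le_prod (fun i hi => by
          have : (0 : ℝ) < i := by exact_mod_cast (by grind : 0 < i)
          positivity) fun i _ => by
          rw [one_div_mul_one_div, add_comm]; exact add_one_le_exp _
    _ = exp (1 / a * ∑ i ∈ Finset.Ico n m, (1 : ℝ) / i) := by rw [← exp_sum, Finset.mul_sum]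
    _ ≤ exp (1 / a * log ((m - 1) / (n - 1))) := by
        gcongr; exact sum_Ico_one_div_le_log hn hnm
    _ = _ := by rw [rpow_def_of_pos hpos, mul_comm]

lemma one_sub_exp_neg_pow_le_exp_neg_one {x D : ℝ} {k : ℕ} (hx : 0 ≤ x) (hD : 0 < D)
    (hxD : x < log D) (hDk : D ≤ k) : (1 - exp (-x)) ^ k ≤ exp (-1) := by
  have hinv : D⁻¹ < exp (-x) := by
    rw [← exp_log hD, ← exp_neg]; exact exp_lt_exp.2 (neg_lt_neg hxD)
  have hk0 : (0 : ℝ) < k := hD.trans_le hDk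
  have hk : (1 : ℝ) ≤ k * exp (-x) :=
    (mul_inv_cancel₀ hD.ne').symm.le.trans (by gcongr)
  calc (1 - exp (-x)) ^ k = (1 - k * exp (-x) / k) ^ k := by
        rw [mul_div_cancel_left₀ _ hk0.ne']
    _ ≤ exp (-(k * exp (-x))) := one_sub_div_pow_le_exp_neg (by
        have : exp (-x) ≤ 1 := exp_le_one_iff.2 (neg_nonpos.2 hx)
        nlinarith)
    _ ≤ exp (-1) := by gcongr

lemma fdens_div_le_rpow (ha : 0 < a) {n m : ℕ} (hn : 2 ≤ n) (hnm : n ≤ m)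
    (hgap : (n - 1) * a + 1 ≤ (m : ℝ) - n)
    (ht : t ∈ Set.Ioo 0 ((1 / a) * log ((n - 1) * a + 1))) :
    fdens a m t / fdens a n t ≤ ((m - 1) / (n - 1) : ℝ) ^ (1 / a) * exp (-1) := by
  obtain ⟨ht0, htn⟩ := ht
  have hn2 : (2 : ℝ) ≤ n := by exact_mod_cast hn
  have hnm' : (n : ℝ) ≤ m := by exact_mod_cast hnm
  have hD : (0 : ℝ) < (n - 1) * a + 1 := by nlinarith
  have hat : a * t < log ((n - 1) * a + 1) := by
    rwa [← lt_div_iff₀' ha, div_eq_inv_mul, ← one_div]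
  rw [fdens_eq_mul (by omega) hnm, mul_div_cancel_left₀ _ (fdens_pos ha ht0 n).ne', neg_mul]
  have hs : 0 ≤ 1 - exp (-(a * t)) := sub_nonneg.2 (exp_le_one_iff.2 (by nlinarith))
  exact mul_le_mul (prod_Ico_one_add_one_div_le_rpow ha hn hnm)
    (one_sub_exp_neg_pow_le_exp_neg_one (by positivity) hD hat (by rwa [Nat.cast_sub hnm]))
    (pow_nonneg hs _) (rpow_nonneg (div_nonneg (by linarith) (by linarith)) _)

lemma supRatio_nonneg (ha : 0 < a) (m n : ℕ) : 0 ≤ supRatio a m n :=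
  Real.sSup_nonneg fun _ ⟨_, ht, hx⟩ =>
    hx ▸ (div_pos (fdens_pos ha ht.1 m) (fdens_pos ha ht.1 n)).le

lemma supRatio_le_rpow (ha : 0 < a) {n m : ℕ} (hn : 2 ≤ n) (hnm : n ≤ m)
    (hgap : (n - 1) * a + 1 ≤ (m : ℝ) - n) :
    supRatio a m n ≤ ((m - 1) / (n - 1) : ℝ) ^ (1 / a) * exp (-1) := by
  have hn2 : (2 : ℝ) ≤ n := by exact_mod_cast hn
  have hnm' : (n : ℝ) ≤ m := by exact_mod_cast hnm
  refine Real.sSup_le ?_ (mul_nonneg (rpow_nonneg (div_nonneg (by linarith) (by linarith)) _)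
    (exp_pos _).le)
  rintro _ ⟨t, ht, rfl⟩
  exact fdens_div_le_rpow ha hn hnm hgap ht

end Bounds

lemma tendsto_mul_sub_one_div_sub_one (c : ℝ) :
    Tendsto (fun n : ℕ => (c * n - 1) / (n - 1)) atTop (𝓝 c) := by
  have hlim : Tendsto (fun n : ℕ => c + (c - 1) / (n - 1)) atTop (𝓝 c) := by
    have hden : Tendsto (fun n : ℕ => (n : ℝ) - 1) atTop atTop := by
      simpa only [sub_eq_add_neg] using
        tendsto_natCast_atTop_atTop.atTop_add (tendsto_const_nhds (x := (-1 : ℝ)))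
    simpa using tendsto_const_nhds.add (tendsto_const_nhds.div_atTop hden)
  refine hlim.congr' ((eventually_gt_atTop 1).mono fun n hn => ?_)
  have : (n : ℝ) - 1 ≠ 0 := sub_ne_zero.2 (by exact_mod_cast hn.ne')
  field_simp
  ring

lemma one_add_rpow_one_div_mul_exp_neg_one_mem_Ioo {a : ℝ} (ha : 0 < a) :
    (1 + a) ^ (1 / a) * exp (-1) ∈ Set.Ioo 0 1 := by
  refine ⟨mul_pos (rpow_pos_of_pos (by linarith) _) (exp_pos _), ?_⟩
  rw [exp_neg, ← div_eq_mul_inv, div_lt_one (exp_pos 1)]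
  calc (1 + a) ^ (1 / a) < exp a ^ (1 / a) := by
        gcongr
        linarith [add_one_lt_exp ha.ne']
    _ = exp 1 := by rw [← exp_mul, mul_one_div_cancel ha.ne']

/-- There exists `γ ∈ (0,1)` with
`limsup_n sup_{t ∈ (0,tₙ)} f_{(d-1)n}(t)/fₙ(t) ≤ 1 - γ`, where
`tₙ = (1/a) log((n-1)a + 1)` and `a = d - 2`. -/
theorem density_ratio_limsup (d : ℕ) (hd : 3 ≤ d) (a : ℝ) (ha : a = (d : ℝ) - 2) :
    ∃ γ ∈ Set.Ioo (0 : ℝ) 1,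
      Filter.limsup
        (fun n : ℕ =>
          sSup ((fun t : ℝ => fdens a ((d - 1) * n) t / fdens a n t) ''
            Set.Ioo 0 ((1 / a) * Real.log (((n : ℝ) - 1) * a + 1))))
        atTop ≤ 1 - γ := by
  have ha1 : 1 ≤ a := by
    have : (3 : ℝ) ≤ d := by exact_mod_cast hd
    linarith
  have ha0 : 0 < a := by linarith
  have hm : ∀ n : ℕ, (((d - 1) * n : ℕ) : ℝ) = (1 + a) * n := fun n => by
    rw [Nat.cast_mul, Nat.cast_sub (by omega), ha]; push_cast; ring
  obtain ⟨hL0, hL1⟩ := one_add_rpow_one_div_mul_exp_neg_one_mem_Ioo ha0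
  set L := (1 + a) ^ (1 / a) * exp (-1)
  refine ⟨1 - L, ⟨by linarith, by linarith⟩, ?_⟩
  rw [sub_sub_cancel]
  change limsup (fun n : ℕ => supRatio a ((d - 1) * n) n) atTop ≤ L
  have hbound : ∀ᶠ n : ℕ in atTop,
      supRatio a ((d - 1) * n) n ≤ (((1 + a) * n - 1) / (n - 1)) ^ (1 / a) * exp (-1) := by
    filter_upwards [eventually_ge_atTop 2] with n hn
    have := supRatio_le_rpow ha0 hn (Nat.le_mul_of_pos_left n (by omega : 0 < d - 1))
      (by rw [hm]; nlinarith)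
    rwa [hm] at this
  have hlim : Tendsto (fun n : ℕ => (((1 + a) * n - 1) / (n - 1)) ^ (1 / a) * exp (-1))
      atTop (𝓝 L) :=
    ((tendsto_mul_sub_one_div_sub_one _).rpow_const (Or.inr (by positivity))).mul_const _
  exact (limsup_le_limsup hbound
    (isBoundedUnder_of ⟨0, fun n => supRatio_nonneg ha0 _ n⟩).isCoboundedUnder_le
    hlim.isBoundedUnder_le).trans_eq hlim.limsup_eq
end
end

section
/- Let N_1, N_2, N_3 be i.i.d. geometric random variables on {0,1,2,...} with P(N_j = n) = p(1-p)^n, where p = e^{-t}. Then the probability that max_j N_j ≤ (1/2)·(N_1+N_2+N_3) converges to 1/4 as t → ∞ (i.e., as p → 0); more precisely, it equals (1-p)²/4 + O(p) as p → 0. -/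
open MeasureTheory ProbabilityTheory Filter Asymptotics

/-!
At most one of `N₁, N₂, N₃` can exceed the sum of the other two, and the balance event is the
complement of these three disjoint events. Conditioning on `Nᵢ = m, Nⱼ = n` and using the tail
`P(N > k) = (1-p)^(k+1)` gives `P(N_k > Nᵢ + Nⱼ) = (1-p) (E[(1-p)^N])² = (1-p)/(2-p)²`. Hence the
probability equals `1 - 3(1-p)/(2-p)²`, a function smooth at `p = 0` with value `1/4` there.
-/

lemma ENNReal.tsum_ofReal_pow {r : ℝ} (h0 : 0 ≤ r) (h1 : r < 1) :
    ∑' n : ℕ, ENNReal.ofReal (r ^ n) = ENNReal.ofReal (1 - r)⁻¹ := by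
  rw [← ENNReal.ofReal_tsum_of_nonneg (fun n => pow_nonneg h0 n)
    (summable_geometric_of_lt_one h0 h1), tsum_geometric_of_lt_one h0 h1]

theorem tsum_geometric_mul_geometric_mul_tail {p : ℝ} (hp0 : 0 < p) (hp1 : p ≤ 1) :
    ∑' mn : ℕ × ℕ, ENNReal.ofReal (p * (1 - p) ^ mn.1) * ENNReal.ofReal (p * (1 - p) ^ mn.2) *
      ENNReal.ofReal ((1 - p) ^ (mn.1 + mn.2 + 1)) = ENNReal.ofReal ((1 - p) / (2 - p) ^ 2) := by
  have hq2 : (1 - p) ^ 2 < 1 := by nlinarith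
  have hterm : ∀ m n : ℕ, ENNReal.ofReal (p * (1 - p) ^ m) * ENNReal.ofReal (p * (1 - p) ^ n) *
      ENNReal.ofReal ((1 - p) ^ (m + n + 1)) = ENNReal.ofReal (p ^ 2 * (1 - p)) *
        (ENNReal.ofReal (((1 - p) ^ 2) ^ m) * ENNReal.ofReal (((1 - p) ^ 2) ^ n)) := by
    intro m n
    rw [← ENNReal.ofReal_mul (by positivity), ← ENNReal.ofReal_mul (by positivity),
      ← ENNReal.ofReal_mul (by positivity), ← ENNReal.ofReal_mul (by positivity)]
    congr 1
    rw [← pow_mul, ← pow_mul]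
    ring
  simp_rw [ENNReal.tsum_prod', hterm, ENNReal.tsum_mul_left, ENNReal.tsum_mul_right,
    ENNReal.tsum_ofReal_pow (by positivity) hq2]
  rw [← ENNReal.ofReal_mul (by positivity), ← ENNReal.ofReal_mul (by positivity)]
  congr 1
  have h2p : 2 - p ≠ 0 := by linarith
  rw [show 1 - (1 - p) ^ 2 = p * (2 - p) by ring]
  field_simp

section Geometric

variable {Ω : Type*} [MeasurableSpace Ω] {μ : Measure Ω} {p : ℝ}

theorem measure_lt_eq_of_geometric {f : Ω → ℕ} (hf : Measurable f) (hp0 : 0 < p) (hp1 : p ≤ 1)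
    (hlaw : ∀ n, μ {ω | f ω = n} = ENNReal.ofReal (p * (1 - p) ^ n)) (n : ℕ) :
    μ {ω | n < f ω} = ENNReal.ofReal ((1 - p) ^ (n + 1)) := by
  have hq0 : 0 ≤ 1 - p := by linarith
  have hunion : {ω | n < f ω} = ⋃ m : ℕ, {ω | f ω = n + 1 + m} := by
    ext ω
    simp only [Set.mem_ofPred_eq, Set.mem_iUnion]
    exact ⟨fun h => ⟨f ω - (n + 1), by omega⟩, fun ⟨m, hm⟩ => by omega⟩
  have hdisj : Pairwise (Function.onFun Disjoint fun m : ℕ => {ω | f ω = n + 1 + m}) :=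
    fun a b hab => Set.disjoint_left.mpr fun ω ha hb => hab (by simp_all)
  rw [hunion, measure_iUnion hdisj fun m => hf (measurableSet_singleton _)]
  simp_rw [hlaw, pow_add (1 - p) (n + 1), ← mul_assoc,
    ENNReal.ofReal_mul (by positivity : 0 ≤ p * (1 - p) ^ (n + 1))]
  rw [ENNReal.tsum_mul_left, ENNReal.tsum_ofReal_pow hq0 (by linarith),
    ← ENNReal.ofReal_mul (by positivity), sub_sub_cancel]
  congr 1
  field_simp

theorem measure_add_lt_eq_tsum {f g h : Ω → ℕ} (hf : Measurable f) (hg : Measurable g)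
    (hh : Measurable h) (hgh : IndepFun g h μ) (hghf : IndepFun (fun ω => (g ω, h ω)) f μ) :
    μ {ω | g ω + h ω < f ω} = ∑' mn : ℕ × ℕ,
      μ {ω | g ω = mn.1} * μ {ω | h ω = mn.2} * μ {ω | mn.1 + mn.2 < f ω} := by
  have hunion : {ω | g ω + h ω < f ω} =
      ⋃ mn : ℕ × ℕ, (fun ω => (g ω, h ω)) ⁻¹' {mn} ∩ f ⁻¹' Set.Ioi (mn.1 + mn.2) := by
    ext ω
    simp
  have hdisj : Pairwise (Function.onFun Disjoint fun mn : ℕ × ℕ =>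
      (fun ω => (g ω, h ω)) ⁻¹' {mn} ∩ f ⁻¹' Set.Ioi (mn.1 + mn.2)) :=
    fun a b hab => Set.disjoint_left.mpr fun ω ha hb => hab (ha.1.symm.trans hb.1)
  rw [hunion, measure_iUnion hdisj fun mn =>
    ((hg.prodMk hh) (measurableSet_singleton mn)).inter (hf measurableSet_Ioi)]
  refine tsum_congr fun mn => ?_
  rw [hghf.measure_inter_preimage_eq_mul _ _ (measurableSet_singleton _) measurableSet_Ioi,
    ← Set.singleton_prod_singleton, Set.mk_preimage_prod,
    hgh.measure_inter_preimage_eq_mul _ _ (measurableSet_singleton _) (measurableSet_singleton _)]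
  rfl

theorem ProbabilityTheory.iIndepFun.measure_add_lt_eq_of_geometric {ι : Type*} {f : ι → Ω → ℕ}
    (hf : ∀ i, Measurable (f i)) (hindep : iIndepFun f μ) (hp0 : 0 < p) (hp1 : p ≤ 1)
    (hlaw : ∀ i n, μ {ω | f i ω = n} = ENNReal.ofReal (p * (1 - p) ^ n))
    {i j k : ι} (hij : i ≠ j) (hik : i ≠ k) (hjk : j ≠ k) :
    μ {ω | f i ω + f j ω < f k ω} = ENNReal.ofReal ((1 - p) / (2 - p) ^ 2) := by
  rw [measure_add_lt_eq_tsum (hf k) (hf i) (hf j) (hindep.indepFun hij)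
    (hindep.indepFun_prodMk hf i j k hik hjk)]
  simp_rw [hlaw, measure_lt_eq_of_geometric (hf k) hp0 hp1 (hlaw k)]
  exact tsum_geometric_mul_geometric_mul_tail hp0 hp1

theorem measureReal_two_mul_max_le_add_eq_of_geometric [IsProbabilityMeasure μ]
    {f : Fin 3 → Ω → ℕ} (hf : ∀ i, Measurable (f i)) (hindep : iIndepFun f μ)
    (hp0 : 0 < p) (hp1 : p ≤ 1)
    (hlaw : ∀ i n, μ {ω | f i ω = n} = ENNReal.ofReal (p * (1 - p) ^ n)) :
    μ.real {ω | 2 * max (f 0 ω) (max (f 1 ω) (f 2 ω)) ≤ f 0 ω + f 1 ω + f 2 ω}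
      = 1 - 3 * ((1 - p) / (2 - p) ^ 2) := by
  have hexceed : ∀ i j k : Fin 3, i ≠ j → i ≠ k → j ≠ k →
      μ.real {ω | f i ω + f j ω < f k ω} = (1 - p) / (2 - p) ^ 2 := fun i j k hij hik hjk => by
    rw [measureReal_def, hindep.measure_add_lt_eq_of_geometric hf hp0 hp1 hlaw hij hik hjk,
      ENNReal.toReal_ofReal (div_nonneg (by linarith) (by positivity))]
  have hmeas : ∀ i j k : Fin 3, MeasurableSet {ω | f i ω + f j ω < f k ω} :=
    fun i j k => measurableSet_lt ((hf i).add (hf j)) (hf k)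
  have hcompl : {ω | 2 * max (f 0 ω) (max (f 1 ω) (f 2 ω)) ≤ f 0 ω + f 1 ω + f 2 ω} =
      ({ω | f 1 ω + f 2 ω < f 0 ω} ∪
        ({ω | f 0 ω + f 2 ω < f 1 ω} ∪ {ω | f 0 ω + f 1 ω < f 2 ω}))ᶜ := by
    ext ω
    simp only [Set.mem_ofPred_eq, Set.mem_compl_iff, Set.mem_union]
    constructor <;> omega
  have hdisj₁ : Disjoint {ω | f 0 ω + f 2 ω < f 1 ω} {ω | f 0 ω + f 1 ω < f 2 ω} :=
    Set.disjoint_left.mpr fun ω h1 h2 => by simp only [Set.mem_ofPred_eq] at h1 h2; omega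
  have hdisj₀ : Disjoint {ω | f 1 ω + f 2 ω < f 0 ω}
      ({ω | f 0 ω + f 2 ω < f 1 ω} ∪ {ω | f 0 ω + f 1 ω < f 2 ω}) := by
    refine Set.disjoint_union_right.mpr ⟨?_, ?_⟩ <;>
      exact Set.disjoint_left.mpr fun ω h1 h2 => by simp only [Set.mem_ofPred_eq] at h1 h2; omega
  rw [hcompl, probReal_compl_eq_one_sub ((hmeas 1 2 0).union ((hmeas 0 2 1).union (hmeas 0 1 2))),
    measureReal_union hdisj₀ ((hmeas 0 2 1).union (hmeas 0 1 2)),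
    measureReal_union hdisj₁ (hmeas 0 1 2), hexceed 1 2 0 (by decide) (by decide) (by decide),
    hexceed 0 2 1 (by decide) (by decide) (by decide),
    hexceed 0 1 2 (by decide) (by decide) (by decide)]
  ring

end Geometric

theorem tendsto_one_sub_three_mul_div_sq :
    Tendsto (fun p : ℝ => 1 - 3 * ((1 - p) / (2 - p) ^ 2)) (nhds 0) (nhds (1 / 4)) := by
  have hcont : ContinuousAt (fun p : ℝ => 1 - 3 * ((1 - p) / (2 - p) ^ 2)) 0 := by
    fun_prop (disch := norm_num)
  convert hcont.tendsto using 2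
  norm_num

theorem one_sub_three_mul_div_sq_sub_isBigO :
    (fun p : ℝ => 1 - 3 * ((1 - p) / (2 - p) ^ 2) - (1 - p) ^ 2 / 4) =O[nhds 0] fun p => p := by
  have hdiff : DifferentiableAt ℝ
      (fun p : ℝ => 1 - 3 * ((1 - p) / (2 - p) ^ 2) - (1 - p) ^ 2 / 4) 0 := by
    fun_prop (disch := norm_num)
  have h := hdiff.isBigO_sub
  norm_num at h
  exact h

/-- For i.i.d. geometric random variables `N₁, N₂, N₃` with `P(N = n) = p(1-p)ⁿ`,
the probability that `max_j N_j ≤ (1/2)(N₁+N₂+N₃)` converges to `1/4` as `p → 0⁺`;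
more precisely it equals `(1-p)²/4 + O(p)` as `p → 0⁺`. -/
theorem three_geometric_balance {Ω : Type*} [MeasurableSpace Ω] (μ : Measure Ω)
    [IsProbabilityMeasure μ] (N : ℝ → Fin 3 → Ω → ℕ)
    (hmeas : ∀ p j, Measurable (N p j))
    (hindep : ∀ p ∈ Set.Ioo (0 : ℝ) 1, iIndepFun (N p) μ)
    (hgeom : ∀ p ∈ Set.Ioo (0 : ℝ) 1, ∀ j : Fin 3, ∀ n : ℕ,
      μ {ω | N p j ω = n} = ENNReal.ofReal (p * (1 - p) ^ n)) :
    Filter.Tendsto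
        (fun p : ℝ =>
          (μ {ω | 2 * max (N p 0 ω) (max (N p 1 ω) (N p 2 ω)) ≤
              N p 0 ω + N p 1 ω + N p 2 ω}).toReal)
        (nhdsWithin 0 (Set.Ioi 0)) (nhds (1 / 4)) ∧
      (fun p : ℝ =>
          (μ {ω | 2 * max (N p 0 ω) (max (N p 1 ω) (N p 2 ω)) ≤
              N p 0 ω + N p 1 ω + N p 2 ω}).toReal - (1 - p) ^ 2 / 4)
        =O[nhdsWithin 0 (Set.Ioi 0)] fun p : ℝ => p := by
  have hprob : (fun p : ℝ => (μ {ω | 2 * max (N p 0 ω) (max (N p 1 ω) (N p 2 ω)) ≤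
      N p 0 ω + N p 1 ω + N p 2 ω}).toReal)
      =ᶠ[nhdsWithin 0 (Set.Ioi 0)] fun p => 1 - 3 * ((1 - p) / (2 - p) ^ 2) := by
    filter_upwards [Ioo_mem_nhdsGT one_pos] with p hp
    exact measureReal_two_mul_max_le_add_eq_of_geometric (hmeas p) (hindep p hp) hp.1 hp.2.le
      (hgeom p hp)
  refine ⟨(tendsto_one_sub_three_mul_div_sq.mono_left nhdsWithin_le_nhds).congr' hprob.symm, ?_⟩
  exact (one_sub_three_mul_div_sq_sub_isBigO.mono nhdsWithin_le_nhds).congr'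
    (hprob.mono fun p hp => by simp only at hp ⊢; rw [hp]) EventuallyEq.rfl
end
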